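/- Let P be a finite poset and k ≥ 0. The quotient space ΔP^{≤k+1} / ΔP^{≤k} is homeomorphic to the wedge of suspensions ⋁_{h ∈ P^{k+1}} Σ ΔP_{<h}. -/

import Mathlib

/-- The geometric realization of the order complex of the subposet of `P` induced on `S`:
functions `P → ℝ` that are nonnegative, finitely supported, sum to `1`, and whose support is
a chain contained in `S`. Simplices are exactly the finite chains of `S`. -/
def ocSet (P : Type) [Preorder P] (S : Set P) : Set (P → ℝ) :=
  {f | (∀ x, 0 ≤ f x) ∧ (Function.support f).Finite ∧ (∑ᶠ x, f x) = 1 ∧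
    Function.support f ⊆ S ∧ IsChain (· ≤ ·) (Function.support f)}

/-- The order complex `Δ S` of the subposet induced on `S`, as a topological space. -/
abbrev ΔSp {P : Type} [Preorder P] (S : Set P) : Type := ↥(ocSet P S)

lemma ocSet_mono {P : Type} [Preorder P] {S T : Set P} (h : S ⊆ T) :
    ocSet P S ⊆ ocSet P T :=
  fun _ hf => ⟨hf.1, hf.2.1, hf.2.2.1, hf.2.2.2.1.trans h, hf.2.2.2.2⟩

/-- The inclusion of order complexes induced by `S ⊆ T`. -/
def ΔIncl {P : Type} [Preorder P] {S T : Set P} (h : S ⊆ T) : C(ΔSp S, ΔSp T) :=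
  ⟨Set.inclusion (ocSet_mono h), continuous_inclusion (ocSet_mono h)⟩
/-- The topological join `X * Y`: the double mapping cylinder of `X ← X × I × Y → Y`
(so that `X * ∅ = X` and `∅ * Y = Y`). -/
abbrev TopJoin (X Y : Type) [TopologicalSpace X] [TopologicalSpace Y] : Type :=
  Quot (fun a b : (X ⊕ (X × unitInterval × Y)) ⊕ Y =>
    (∃ x y, a = Sum.inl (Sum.inr (x, 0, y)) ∧ b = Sum.inl (Sum.inl x)) ∨
    (∃ x y, a = Sum.inl (Sum.inr (x, 1, y)) ∧ b = Sum.inr y))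

/-- The (unreduced) suspension `Σ X = S⁰ * X`. -/
abbrev Susp (X : Type) [TopologicalSpace X] : Type := TopJoin Bool X

/-- The wedge (one-point union) of two pointed spaces. -/
abbrev Wedge (X Y : Type) [TopologicalSpace X] [TopologicalSpace Y] (x0 : X) (y0 : Y) : Type :=
  Quot (fun a b : X ⊕ Y => a = Sum.inl x0 ∧ b = Sum.inr y0)

/-- The wedge of a family of pointed spaces (with an auxiliary base point glued to all the
base points of the family, so that the empty wedge is a one-point space). -/
abbrev BigWedge {ι : Type} (X : ι → Type) [∀ i, TopologicalSpace (X i)] (pt : ∀ i, X i) : Type :=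
  Quot (fun a b : (Σ i, X i) ⊕ Unit => (∃ i, a = Sum.inl ⟨i, pt i⟩) ∧ b = Sum.inr ())

/-- The base point of a wedge of a family. -/
def BigWedge.base {ι : Type} {X : ι → Type} [∀ i, TopologicalSpace (X i)] {pt : ∀ i, X i} :
    BigWedge X pt :=
  Quot.mk _ (Sum.inr ())
/-- The quotient space `X/A` (based: an external base point is glued to all points of `A`). -/
abbrev QuotBy (X : Type) [TopologicalSpace X] (A : Set X) : Type :=
  Quot (fun a b : X ⊕ Unit => (∃ x ∈ A, a = Sum.inl x) ∧ b = Sum.inr ())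
/-- `P^{≤ k}`: elements of height at most `k` (i.e. every chain `x₀ < … < x_{k'-1} < h`
has `k' ≤ k`). -/
def levelLE (P : Type) [PartialOrder P] (k : ℕ) : Set P :=
  {x | Order.height x ≤ (k : ℕ∞)}

/-- The `k`-th level `P^k = P^{≤k} \ P^{≤k-1}`: elements of height exactly `k`. -/
def level (P : Type) [PartialOrder P] (k : ℕ) : Set P :=
  {x | Order.height x = (k : ℕ∞)}

/-!
A point of `ΔP^{≤k+1}` is a convex combination of the vertices of a chain. The elements of
`P^{k+1}` are pairwise incomparable and maximal in `P^{≤k+1}`, so such a chain contains at most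
one of them, `h` say, and then lies in `P_{≤h}`. Hence `ΔP^{≤k+1}` is `ΔP^{≤k}` with the cones
`ΔP_{≤h} = h * ΔP_{<h}` attached along their bases `ΔP_{<h} ⊆ ΔP^{≤k}`, and collapsing `ΔP^{≤k}`
turns each cone into the suspension `Σ ΔP_{<h}`, all of them glued at the collapsed point.
Explicitly, the point at height `t` over `g ∈ ΔP_{<h}` goes to `t • h + (1 - t) • g`. This is a
continuous bijection from the compact wedge onto the quotient, and the quotient is Hausdorff
because `ΔP^{≤k}` is closed in the compact metrizable space `ΔP^{≤k+1}`.
-/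

open Set unitInterval

namespace QuotBy

variable {X Y : Type} [TopologicalSpace X] {A : Set X}

def mk (x : X) : QuotBy X A := Quot.mk _ (Sum.inl x)

def base : QuotBy X A := Quot.mk _ (Sum.inr ())

lemma mk_eq_base {x : X} (hx : x ∈ A) : (mk x : QuotBy X A) = base :=
  Quot.sound ⟨⟨x, hx, rfl⟩, rfl⟩

@[elab_as_elim]
lemma ind {p : QuotBy X A → Prop} (mk : ∀ x, p (mk x)) (base : p base) (q : QuotBy X A) :
    p q := by
  induction q using Quot.ind with
  | mk a => rcases a with x | ⟨⟩; exacts [mk x, base]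

def lift (F : X → Y) (y : Y) (hF : ∀ x ∈ A, F x = y) : QuotBy X A → Y :=
  Quot.lift (Sum.elim F fun _ => y) (by rintro _ _ ⟨⟨x, hx, rfl⟩, rfl⟩; exact hF x hx)

variable {F : X → Y} {y : Y} {hF : ∀ x ∈ A, F x = y}

@[simp] lemma lift_mk (x : X) : lift F y hF (mk x) = F x := rfl

@[simp] lemma lift_base : lift F y hF base = y := rfl

lemma continuous_lift [TopologicalSpace Y] (hFc : Continuous F) : Continuous (lift F y hF) :=
  continuous_quot_lift _ (hFc.sumElim continuous_const)

lemma continuous_mk : Continuous (mk : X → QuotBy X A) :=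
  continuous_quot_mk.comp continuous_inl

lemma exists_lift_ne [T1Space X] [CompletelyRegularSpace X] (hA : IsClosed A) {x : X}
    (hx : x ∉ A) {q : QuotBy X A} (hq : q ≠ mk x) :
    ∃ (g : X → ℝ) (hg : ∀ a ∈ A, g a = 0), Continuous g ∧ lift g 0 hg (mk x) ≠ lift g 0 hg q := by
  obtain ⟨K, hK, hxK, hAK, hqK⟩ : ∃ K : Set X, IsClosed K ∧ x ∉ K ∧ A ⊆ K ∧
      (q = base ∨ ∃ z ∈ K, q = mk z) := by
    induction q using QuotBy.ind with
    | base => exact ⟨A, hA, hx, subset_rfl, Or.inl rfl⟩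
    | mk z =>
      refine ⟨A ∪ {z}, hA.union isClosed_singleton, ?_, subset_union_left,
        Or.inr ⟨z, mem_union_right A rfl, rfl⟩⟩
      rintro (hxA | rfl)
      exacts [hx hxA, hq rfl]
  obtain ⟨f, hfc, hfx, hfK⟩ := CompletelyRegularSpace.completely_regular x K hK hxK
  refine ⟨fun z => 1 - f z, fun a ha => by simp [hfK (hAK ha)],
    continuous_const.sub (continuous_subtype_val.comp hfc), ?_⟩
  rcases hqK with rfl | ⟨z, hz, rfl⟩
  · simp [hfx]
  · simp [hfx, hfK hz]

lemma eq_base_or_exists_mk (q : QuotBy X A) : q = base ∨ ∃ x ∉ A, q = mk x := by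
  induction q using QuotBy.ind with
  | mk x => by_cases hx : x ∈ A; exacts [Or.inl (mk_eq_base hx), Or.inr ⟨x, hx, rfl⟩]
  | base => exact Or.inl rfl

theorem t2Space [T1Space X] [CompletelyRegularSpace X] (hA : IsClosed A) :
    T2Space (QuotBy X A) := by
  have separate {x : X} (hx : x ∉ A) (q : QuotBy X A) (hq : q ≠ mk x) :
      ∃ u v : Set (QuotBy X A), IsOpen u ∧ IsOpen v ∧ mk x ∈ u ∧ q ∈ v ∧ Disjoint u v := by
    obtain ⟨g, hg, hgc, hne⟩ := exists_lift_ne hA hx hq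
    exact separated_by_continuous (continuous_lift hgc) hne
  refine ⟨fun p q hpq => ?_⟩
  rcases eq_base_or_exists_mk p with rfl | ⟨x, hx, rfl⟩
  · rcases eq_base_or_exists_mk q with rfl | ⟨z, hz, rfl⟩
    · exact absurd rfl hpq
    · obtain ⟨u, v, hu, hv, hzu, hbv, huv⟩ := separate hz base hpq
      exact ⟨v, u, hv, hu, hbv, hzu, huv.symm⟩
  · exact separate hx q (Ne.symm hpq)

end QuotBy

namespace BigWedge

variable {ι Y : Type} {X : ι → Type} [∀ i, TopologicalSpace (X i)] {pt : ∀ i, X i}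

def incl (i : ι) (x : X i) : BigWedge X pt := Quot.mk _ (Sum.inl ⟨i, x⟩)

lemma incl_pt (i : ι) : (incl i (pt i) : BigWedge X pt) = base :=
  Quot.sound ⟨⟨i, rfl⟩, rfl⟩

@[elab_as_elim]
lemma ind {p : BigWedge X pt → Prop} (incl : ∀ i x, p (incl i x)) (base : p base)
    (w : BigWedge X pt) : p w := by
  induction w using Quot.ind with
  | mk a => rcases a with ⟨i, x⟩ | ⟨⟩; exacts [incl i x, base]

def lift (F : ∀ i, X i → Y) (y : Y) (hF : ∀ i, F i (pt i) = y) : BigWedge X pt → Y :=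
  Quot.lift (Sum.elim (fun z => F z.1 z.2) fun _ => y) (by rintro _ _ ⟨⟨i, rfl⟩, rfl⟩; exact hF i)

variable {F : ∀ i, X i → Y} {y : Y} {hF : ∀ i, F i (pt i) = y}

@[simp] lemma lift_incl (i : ι) (x : X i) : lift F y hF (incl i x) = F i x := rfl

lemma continuous_lift [TopologicalSpace Y] (hFc : ∀ i, Continuous (F i)) :
    Continuous (lift F y hF) :=
  continuous_quot_lift _ ((continuous_sigma hFc).sumElim continuous_const)

end BigWedge

namespace Susp

variable {X Y : Type} [TopologicalSpace X]

def pole (b : Bool) : Susp X := Quot.mk _ (Sum.inl (Sum.inl b))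

def equator (x : X) : Susp X := Quot.mk _ (Sum.inr x)

def conePt (b : Bool) (s : I) (x : X) : Susp X := Quot.mk _ (Sum.inl (Sum.inr (b, s, x)))

lemma conePt_zero (b : Bool) (x : X) : conePt b 0 x = pole b :=
  Quot.sound (Or.inl ⟨b, x, rfl, rfl⟩)

lemma conePt_one (b : Bool) (x : X) : conePt b 1 x = equator x :=
  Quot.sound (Or.inr ⟨b, x, rfl, rfl⟩)

lemma conePt_congr (b : Bool) {s s' : I} (h : (s : ℝ) = s') (x : X) :
    conePt b s x = conePt b s' x := by
  rw [Subtype.ext h]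

noncomputable def coneHeight : Bool → I → I
  | false, s => ⟨s / 2, div_mem s.2.1 zero_le_two (s.2.2.trans one_le_two)⟩
  | true, s => σ ⟨s / 2, div_mem s.2.1 zero_le_two (s.2.2.trans one_le_two)⟩

lemma coe_coneHeight_false (s : I) : (coneHeight false s : ℝ) = s / 2 := rfl

lemma coe_coneHeight_true (s : I) : (coneHeight true s : ℝ) = 1 - s / 2 := rfl

lemma coneHeight_zero (b : Bool) : coneHeight b 0 = bif b then 1 else 0 := by
  cases b <;> ext <;> simp [coe_coneHeight_false, coe_coneHeight_true]

lemma coneHeight_one (b : Bool) : coneHeight b 1 = coneHeight false 1 := by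
  cases b <;> ext <;> simp only [coe_coneHeight_false, coe_coneHeight_true]; norm_num

lemma continuous_coneHeight (b : Bool) : Continuous (coneHeight b) := by
  cases b <;> unfold coneHeight <;> fun_prop

/-- The point at height `t` on the meridian through `x`: `pole false` at `t = 0`, the equator at
`t = 1 / 2` and `pole true` at `t = 1`. -/
noncomputable def mk (t : I) (x : X) : Susp X :=
  if ht : (t : ℝ) ≤ 1 / 2 then conePt false ⟨2 * t, by constructor <;> linarith [t.2.1]⟩ x
  else conePt true ⟨2 * (1 - t), by constructor <;> linarith [t.2.2]⟩ x

lemma mk_coneHeight (b : Bool) (s : I) (x : X) : mk (coneHeight b s) x = conePt b s x := by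
  have := s.2.2
  cases b
  · rw [mk, dif_pos (by rw [coe_coneHeight_false]; linarith)]
    exact conePt_congr _
      (by show 2 * (coneHeight false s : ℝ) = s; rw [coe_coneHeight_false]; ring) x
  · by_cases hs : (s : ℝ) = 1
    · have h2 : 2 * (coneHeight true s : ℝ) = 1 := by rw [coe_coneHeight_true, hs]; norm_num
      rw [mk, dif_pos (by linarith), conePt_congr _ (s' := 1) h2, conePt_one,
        conePt_congr _ (s' := 1) hs, conePt_one]
    · rw [mk, dif_neg (by rw [coe_coneHeight_true]; linarith [lt_of_le_of_ne this hs])]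
      exact conePt_congr _
        (by show 2 * (1 - (coneHeight true s : ℝ)) = s; rw [coe_coneHeight_true]; ring) x

lemma eq_pole_or_mk (z : Susp X) :
    (∃ b, z = pole b) ∨ ∃ (t : I) (x : X), 0 < (t : ℝ) ∧ (t : ℝ) < 1 ∧ z = mk t x := by
  have ofConePt (b : Bool) (s : I) (x : X) : (∃ b', conePt b s x = pole b') ∨
      ∃ (t : I) (x' : X), 0 < (t : ℝ) ∧ (t : ℝ) < 1 ∧ conePt b s x = mk t x' := by
    by_cases hs : (s : ℝ) = 0
    · exact Or.inl ⟨b, by rw [conePt_congr b (s' := 0) hs, conePt_zero]⟩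
    · have := s.2.2
      have : 0 < (s : ℝ) := lt_of_le_of_ne s.2.1 (Ne.symm hs)
      refine Or.inr ⟨coneHeight b s, x, ?_, ?_, (mk_coneHeight b s x).symm⟩ <;> cases b <;>
        simp only [coe_coneHeight_false, coe_coneHeight_true] <;> linarith
  induction z using Quot.ind with
  | mk a =>
    rcases a with (b | ⟨b, s, x⟩) | x
    · exact Or.inl ⟨b, rfl⟩
    · exact ofConePt b s x
    · rw [show Quot.mk _ (Sum.inr x) = conePt false 1 x from (conePt_one false x).symm]
      exact ofConePt false 1 x

noncomputable def lift (F : I → X → Y) (y₀ y₁ : Y) (h₀ : ∀ x, F 0 x = y₀)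
    (h₁ : ∀ x, F 1 x = y₁) : Susp X → Y :=
  Quot.lift
    (Sum.elim (Sum.elim (fun b => bif b then y₁ else y₀) fun p => F (coneHeight p.1 p.2.1) p.2.2)
      (F (coneHeight false 1)))
    (by
      rintro _ _ (⟨b, x, rfl, rfl⟩ | ⟨b, x, rfl, rfl⟩)
      · cases b <;> simp [coneHeight_zero, h₀, h₁]
      · simp [coneHeight_one])

variable {F : I → X → Y} {y₀ y₁ : Y} {h₀ : ∀ x, F 0 x = y₀} {h₁ : ∀ x, F 1 x = y₁}

@[simp] lemma lift_pole_false : lift F y₀ y₁ h₀ h₁ (pole false) = y₀ := rfl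

@[simp] lemma lift_mk (t : I) (x : X) : lift F y₀ y₁ h₀ h₁ (mk t x) = F t x := by
  unfold mk
  split_ifs
  · exact congrArg (F · x) (Subtype.ext (by show 2 * (t : ℝ) / 2 = t; ring))
  · exact congrArg (F · x) (Subtype.ext (by show 1 - 2 * (1 - (t : ℝ)) / 2 = t; ring))

lemma continuous_lift [TopologicalSpace Y] (hF : Continuous (Function.uncurry F)) :
    Continuous (lift F y₀ y₁ h₀ h₁) := by
  refine continuous_quot_lift _ (Continuous.sumElim (Continuous.sumElim
    continuous_of_discreteTopology ?_) (by fun_prop))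
  exact continuous_prod_of_discrete_left.mpr fun b =>
    hF.comp (((continuous_coneHeight b).comp continuous_fst).prodMk continuous_snd)

end Susp

open Function

section OrderComplex

lemma isClosed_setOf_support_subset {P : Type} (S : Set P) :
    IsClosed {f : P → ℝ | support f ⊆ S} := by
  simp_rw [support_subset_iff', ofPred_forall]
  exact isClosed_iInter fun x => isClosed_iInter fun _ => isClosed_eq (continuous_apply x)
    continuous_const

variable {P : Type} [Preorder P]

lemma isChain_support_iff {f : P → ℝ} :
    IsChain (· ≤ ·) (support f) ↔ ∀ x y, ¬(x ≤ y ∨ y ≤ x) → f x * f y = 0 := by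
  refine ⟨fun hc x y hxy => ?_, fun h x hx y hy hne => ?_⟩
  · by_contra hne
    obtain ⟨hx, hy⟩ := mul_ne_zero_iff.mp hne
    exact hxy (hc.total hx hy)
  · by_contra hxy
    exact mul_ne_zero hx hy (h x y hxy)

lemma isClosed_setOf_isChain_support :
    IsClosed {f : P → ℝ | IsChain (· ≤ ·) (support f)} := by
  simp_rw [isChain_support_iff, ofPred_forall]
  exact isClosed_iInter fun x => isClosed_iInter fun y => isClosed_iInter fun _ =>
    isClosed_eq ((continuous_apply x).mul (continuous_apply y)) continuous_const

variable {S T : Set P} {f : P → ℝ}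

lemma mem_ocSet_of_support_subset (hf : f ∈ ocSet P S) (hT : support f ⊆ T) : f ∈ ocSet P T :=
  ⟨hf.1, hf.2.1, hf.2.2.1, hT, hf.2.2.2.2⟩

lemma eq_zero_of_mem_ocSet (hf : f ∈ ocSet P S) {x : P} (hx : x ∉ S) : f x = 0 :=
  notMem_support.mp fun hx' => hx (hf.2.2.2.1 hx')

variable [Fintype P]

lemma ocSet_eq_inter (S : Set P) : ocSet P S =
    stdSimplex ℝ P ∩ ({f | support f ⊆ S} ∩ {f | IsChain (· ≤ ·) (support f)}) := by
  ext f
  simp [ocSet, stdSimplex, finsum_eq_sum_of_fintype, toFinite, and_assoc]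

lemma mem_stdSimplex_of_mem_ocSet (hf : f ∈ ocSet P S) : f ∈ stdSimplex ℝ P :=
  ((ocSet_eq_inter S).subset hf).1

lemma isCompact_ocSet (S : Set P) : IsCompact (ocSet P S) := by
  rw [ocSet_eq_inter]
  exact (isCompact_stdSimplex ℝ P).inter_right
    ((isClosed_setOf_support_subset S).inter isClosed_setOf_isChain_support)

instance (S : Set P) : CompactSpace (ΔSp S) :=
  isCompact_iff_compactSpace.mp (isCompact_ocSet S)

end OrderComplex

lemma eq_single_of_mem_stdSimplex {P : Type} [Fintype P] [DecidableEq P] {f : P → ℝ}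
    (hf : f ∈ stdSimplex ℝ P) {h : P} (h1 : f h = 1) : f = Pi.single h 1 := by
  have hrest : ∑ x ∈ Finset.univ.erase h, f x = 0 := by
    have := Finset.add_sum_erase Finset.univ f (Finset.mem_univ h)
    rw [hf.2, h1] at this
    linarith
  ext x
  rcases eq_or_ne x h with rfl | hx
  · simp [h1]
  · rw [Pi.single_eq_of_ne hx]
    exact (Finset.sum_eq_zero_iff_of_nonneg fun y _ => hf.1 y).mp hrest x (by simp [hx])

section Cone

variable {P : Type} [DecidableEq P] {h : P} {f g : P → ℝ} {t : ℝ}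

def cone (h : P) (t : ℝ) (g : P → ℝ) : P → ℝ := t • Pi.single h 1 + (1 - t) • g

noncomputable def coneBase (h : P) (f : P → ℝ) : P → ℝ := (1 - f h)⁻¹ • update f h 0

lemma cone_zero (h : P) (g : P → ℝ) : cone h 0 g = g := by simp [cone]

lemma cone_one (h : P) (g : P → ℝ) : cone h 1 g = Pi.single h 1 := by simp [cone]

lemma cone_apply_of_ne {x : P} (hx : x ≠ h) : cone h t g x = (1 - t) * g x := by
  simp [cone, Pi.single_eq_of_ne hx]

lemma cone_coneBase (h1 : f h ≠ 1) : cone h (f h) (coneBase h f) = f := by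
  have : 1 - f h ≠ 0 := sub_ne_zero.mpr (Ne.symm h1)
  ext x
  rcases eq_or_ne x h with rfl | hx
  · simp [cone, coneBase]
  · rw [cone_apply_of_ne hx]
    simp [coneBase, update_of_ne hx, this]

section Preorder

variable [Preorder P]

lemma cone_apply_self (hg : g ∈ ocSet P (Iio h)) : cone h t g h = t := by
  simp [cone, eq_zero_of_mem_ocSet hg (lt_irrefl h)]

lemma coneBase_cone (ht : t ≠ 1) (hg : g ∈ ocSet P (Iio h)) : coneBase h (cone h t g) = g := by
  have : 1 - t ≠ 0 := sub_ne_zero.mpr (Ne.symm ht)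
  ext x
  rcases eq_or_ne x h with rfl | hx
  · simp [coneBase, eq_zero_of_mem_ocSet hg (lt_irrefl x)]
  · simp [coneBase, cone_apply_self hg, update_of_ne hx, cone_apply_of_ne hx, this]

end Preorder

variable [PartialOrder P] [Fintype P]

lemma single_mem_ocSet {S : Set P} (hh : h ∈ S) : Pi.single h 1 ∈ ocSet P S := by
  have hsupp : support (Pi.single h (1 : ℝ)) ⊆ {h} := Pi.support_single_subset
  rw [ocSet_eq_inter]
  exact ⟨single_mem_stdSimplex ℝ h, hsupp.trans (singleton_subset_iff.mpr hh),
    subsingleton_singleton.anti hsupp |>.isChain⟩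

lemma cone_mem_ocSet (ht : t ∈ I) (hg : g ∈ ocSet P (Iio h)) : cone h t g ∈ ocSet P (Iic h) := by
  have hsupp : support (cone h t g) ⊆ insert h (support g) := by
    intro x hx
    rcases eq_or_ne x h with rfl | hxh
    · exact mem_insert x _
    · rw [mem_support, cone_apply_of_ne hxh] at hx
      exact mem_insert_of_mem h (right_ne_zero_of_mul hx)
  have hins : insert h (support g) ⊆ Iic h := by
    rw [← Iio_insert]; exact insert_subset_insert hg.2.2.2.1
  rw [ocSet_eq_inter]
  refine ⟨convex_stdSimplex ℝ P (single_mem_stdSimplex ℝ h) (mem_stdSimplex_of_mem_ocSet hg)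
    ht.1 (by linarith [ht.2]) (by ring), hsupp.trans hins, ?_⟩
  refine (hg.2.2.2.2.insert fun b hb _ => Or.inr ?_).mono hsupp
  exact (hg.2.2.2.1 hb).le

lemma coneBase_mem_ocSet (hf : f ∈ ocSet P (Iic h)) (h1 : f h ≠ 1) :
    coneBase h f ∈ ocSet P (Iio h) := by
  have hfS := mem_stdSimplex_of_mem_ocSet hf
  have hpos : 0 < 1 - f h := sub_pos.mpr (lt_of_le_of_ne (mem_Icc_of_mem_stdSimplex hfS h).2 h1)
  have hsupp : support (coneBase h f) ⊆ support f \ {h} := by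
    rw [← support_update_zero]; exact support_const_smul_subset _ _
  rw [ocSet_eq_inter]
  refine ⟨⟨fun x => ?_, ?_⟩, hsupp.trans ?_, hf.2.2.2.2.mono (hsupp.trans sdiff_subset)⟩
  · rcases eq_or_ne x h with rfl | hx
    · simp [coneBase]
    · simpa [coneBase, update_of_ne hx] using mul_nonneg (inv_nonneg.mpr hpos.le) (hfS.1 x)
  · have hsum : ∑ x, update f h 0 x = 1 - f h := by
      rw [Finset.sum_update_of_mem (Finset.mem_univ h), ← hfS.2,
        ← Finset.add_sum_erase _ _ (Finset.mem_univ h), Finset.sdiff_singleton_eq_erase]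
      ring
    simp only [coneBase, Pi.smul_apply, smul_eq_mul, ← Finset.mul_sum, hsum]
    exact inv_mul_cancel₀ hpos.ne'
  · rw [← Iic_sdiff_right]; exact sdiff_subset_sdiff_left hf.2.2.2.1

end Cone

section Levels

variable {P : Type} [PartialOrder P] {k : ℕ} {h x : P}

lemma mem_levelLE_of_mem_level (hh : h ∈ level P k) : h ∈ levelLE P k :=
  le_of_eq hh

lemma not_lt_of_mem_level (hh : h ∈ level P k) (hx : x ∈ levelLE P k) : ¬h < x := fun hlt =>
  (Order.height_strictMono hlt (hh ▸ ENat.natCast_lt_top k)).not_ge (hh ▸ hx)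

lemma notMem_levelLE_of_mem_level (hh : h ∈ level P (k + 1)) : h ∉ levelLE P k := fun hk => by
  have : ((k + 1 : ℕ) : ℕ∞) ≤ k := hh ▸ hk
  exact absurd (by exact_mod_cast this) k.not_succ_le_self

lemma mem_levelLE_of_notMem_level (hx : x ∈ levelLE P (k + 1)) (hx' : x ∉ level P (k + 1)) :
    x ∈ levelLE P k :=
  ENat.lt_natCast_add_one_iff.mp (lt_of_le_of_ne hx hx')

lemma Iio_subset_levelLE (hh : h ∈ level P (k + 1)) : Iio h ⊆ levelLE P k := fun _ hx =>
  ENat.lt_natCast_add_one_iff.mp (Order.height_le_coe_iff.mp (le_of_eq hh) _ hx)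

lemma Iic_subset_levelLE (hh : h ∈ level P k) : Iic h ⊆ levelLE P k := fun _ hx =>
  (Order.height_mono hx).trans (le_of_eq hh)

variable {f : P → ℝ}

lemma mem_ocSet_Iic_of_mem_level (hf : f ∈ ocSet P (levelLE P k)) (hh : h ∈ level P k)
    (hfh : f h ≠ 0) : f ∈ ocSet P (Iic h) := by
  refine mem_ocSet_of_support_subset hf fun x hx => ?_
  rcases eq_or_ne x h with rfl | hxh
  · exact le_rfl
  · exact (hf.2.2.2.2 hx hfh hxh).resolve_right fun hhx =>
      not_lt_of_mem_level hh (hf.2.2.2.1 hx) (lt_of_le_of_ne hhx (Ne.symm hxh))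

lemma eq_of_mem_level_of_apply_ne_zero (hf : f ∈ ocSet P (levelLE P k)) {h' : P}
    (hh : h ∈ level P k) (hh' : h' ∈ level P k) (hfh : f h ≠ 0) (hfh' : f h' ≠ 0) : h' = h :=
  ((mem_ocSet_Iic_of_mem_level hf hh hfh).2.2.2.1 hfh').eq_of_not_lt
    (not_lt_of_mem_level hh' (mem_levelLE_of_mem_level hh))

lemma apply_eq_zero_of_mem_level (hf : f ∈ ocSet P (levelLE P k)) (hh : h ∈ level P (k + 1)) :
    f h = 0 :=
  eq_zero_of_mem_ocSet hf (notMem_levelLE_of_mem_level hh)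

lemma mem_ocSet_levelLE_of_forall_level (hf : f ∈ ocSet P (levelLE P (k + 1)))
    (h0 : ∀ h ∈ level P (k + 1), f h = 0) : f ∈ ocSet P (levelLE P k) :=
  mem_ocSet_of_support_subset hf fun x hx =>
    mem_levelLE_of_notMem_level (hf.2.2.2.1 hx) fun hx' => hx (h0 x hx')

end Levels

section Quotient

variable (P : Type) [PartialOrder P] [Fintype P] [DecidableEq P] (k : ℕ)

abbrev levelQuot : Type :=
  QuotBy (ΔSp (levelLE P (k + 1)))
    {f : ΔSp (levelLE P (k + 1)) | (f : P → ℝ) ∈ ocSet P (levelLE P k)}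

abbrev levelWedge : Type :=
  BigWedge (fun h : level P (k + 1) => Susp (ΔSp (Iio (h : P)))) fun _ => Susp.pole false

variable {P k}

noncomputable def suspToQuot (h : level P (k + 1)) : Susp (ΔSp (Iio (h : P))) → levelQuot P k :=
  Susp.lift
    (fun t g => QuotBy.mk
      ⟨cone h t g, ocSet_mono (Iic_subset_levelLE h.2) (cone_mem_ocSet t.2 g.2)⟩)
    QuotBy.base
    (QuotBy.mk ⟨Pi.single h 1, single_mem_ocSet (mem_levelLE_of_mem_level h.2)⟩)
    (fun g => QuotBy.mk_eq_base (by
      simpa [cone_zero] using ocSet_mono (Iio_subset_levelLE h.2) g.2))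
    (fun g => by simp [cone_one])

lemma suspToQuot_pole_false (h : level P (k + 1)) :
    suspToQuot h (Susp.pole false) = QuotBy.base :=
  Susp.lift_pole_false

noncomputable def wedgeToQuot : levelWedge P k → levelQuot P k :=
  BigWedge.lift suspToQuot QuotBy.base suspToQuot_pole_false

lemma continuous_wedgeToQuot : Continuous (wedgeToQuot : levelWedge P k → levelQuot P k) := by
  refine BigWedge.continuous_lift fun h => Susp.continuous_lift ?_
  refine QuotBy.continuous_mk.comp (Continuous.subtype_mk ?_ _)
  unfold cone
  fun_prop

/-- `f` lies at height `f h` on the segment from `coneBase h f` to the vertex `h`. -/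
noncomputable def suspCoord (f : ΔSp (levelLE P (k + 1))) (h : level P (k + 1)) :
    Susp (ΔSp (Iio (h : P))) :=
  if h1 : (f : P → ℝ) h = 1 then Susp.pole true
  else if h0 : (f : P → ℝ) h = 0 then Susp.pole false
  else Susp.mk ⟨(f : P → ℝ) h, mem_Icc_of_mem_stdSimplex (mem_stdSimplex_of_mem_ocSet f.2) h⟩
    ⟨coneBase (h : P) f, coneBase_mem_ocSet (mem_ocSet_Iic_of_mem_level f.2 h.2 h0) h1⟩

lemma suspToQuot_suspCoord {f : ΔSp (levelLE P (k + 1))} {h : level P (k + 1)}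
    (hfh : (f : P → ℝ) h ≠ 0) : suspToQuot h (suspCoord f h) = QuotBy.mk f := by
  unfold suspCoord
  split_ifs with h1
  · refine congrArg QuotBy.mk (Subtype.ext ?_)
    exact (eq_single_of_mem_stdSimplex (mem_stdSimplex_of_mem_ocSet f.2) h1).symm
  · rw [suspToQuot, Susp.lift_mk]
    exact congrArg QuotBy.mk (Subtype.ext (cone_coneBase h1))

lemma suspCoord_cone {h : level P (k + 1)} {t : I} (ht0 : 0 < (t : ℝ)) (ht1 : (t : ℝ) < 1)
    (g : ΔSp (Iio (h : P))) (hf : cone (h : P) t (g : P → ℝ) ∈ ocSet P (levelLE P (k + 1))) :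
    suspCoord ⟨cone (h : P) t (g : P → ℝ), hf⟩ h = Susp.mk t g := by
  have ht : cone (h : P) t g h = t := cone_apply_self g.2
  unfold suspCoord
  rw [dif_neg (show cone (h : P) t g h ≠ 1 by rw [ht]; exact ht1.ne),
    dif_neg (show cone (h : P) t g h ≠ 0 by rw [ht]; exact ht0.ne')]
  congr 1
  · exact Subtype.ext ht
  · exact Subtype.ext (coneBase_cone ht1.ne g.2)

open Classical in
noncomputable def quotToWedge : levelQuot P k → levelWedge P k :=
  QuotBy.lift
    (fun f => if hf : ∃ h : level P (k + 1), (f : P → ℝ) h ≠ 0 then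
      BigWedge.incl hf.choose (suspCoord f hf.choose) else BigWedge.base)
    BigWedge.base
    (fun _ hf => dif_neg fun ⟨h, hfh⟩ => hfh (apply_eq_zero_of_mem_level hf h.2))

lemma quotToWedge_mk {f : ΔSp (levelLE P (k + 1))} {h : level P (k + 1)}
    (hfh : (f : P → ℝ) h ≠ 0) :
    quotToWedge (QuotBy.mk f) = BigWedge.incl h (suspCoord f h) := by
  have hex : ∃ h : level P (k + 1), (f : P → ℝ) h ≠ 0 := ⟨h, hfh⟩
  obtain rfl : hex.choose = h :=
    Subtype.ext (eq_of_mem_level_of_apply_ne_zero f.2 h.2 hex.choose.2 hfh hex.choose_spec)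
  rw [quotToWedge, QuotBy.lift_mk, dif_pos hex]

lemma quotToWedge_wedgeToQuot (w : levelWedge P k) : quotToWedge (wedgeToQuot w) = w := by
  induction w using BigWedge.ind with
  | base => rfl
  | incl h z =>
    rcases Susp.eq_pole_or_mk z with ⟨_ | _, rfl⟩ | ⟨t, g, ht0, ht1, rfl⟩
    · exact (BigWedge.incl_pt h).symm
    · have h1 : (Pi.single (h : P) 1 : P → ℝ) h = 1 := Pi.single_eq_same _ _
      refine (quotToWedge_mk (h1.trans_ne one_ne_zero)).trans ?_
      rw [suspCoord, dif_pos h1]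
    · have ht : cone (h : P) t g h = t := cone_apply_self g.2
      rw [wedgeToQuot, BigWedge.lift_incl, suspToQuot, Susp.lift_mk,
        quotToWedge_mk (ht.trans_ne ht0.ne'), suspCoord_cone ht0 ht1]

lemma wedgeToQuot_quotToWedge (q : levelQuot P k) : wedgeToQuot (quotToWedge q) = q := by
  induction q using QuotBy.ind with
  | base => rfl
  | mk f =>
    by_cases hf : ∃ h : level P (k + 1), (f : P → ℝ) h ≠ 0
    · obtain ⟨h, hfh⟩ := hf
      rw [quotToWedge_mk hfh]
      exact suspToQuot_suspCoord hfh
    · have hf0 h (hh : h ∈ level P (k + 1)) : (f : P → ℝ) h = 0 :=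
        not_not.mp fun hfh => hf ⟨⟨h, hh⟩, hfh⟩
      rw [QuotBy.mk_eq_base (x := f) (mem_ocSet_levelLE_of_forall_level f.2 hf0)]
      rfl

variable (P k) in
noncomputable def wedgeEquivQuot : levelWedge P k ≃ levelQuot P k :=
  ⟨wedgeToQuot, quotToWedge, quotToWedge_wedgeToQuot, wedgeToQuot_quotToWedge⟩

instance : T2Space (levelQuot P k) :=
  QuotBy.t2Space ((isCompact_ocSet _).isClosed.preimage continuous_subtype_val)

end Quotient

/-- **Theorem `Buket_nadstrojka`.** For a finite poset `P` and `k ≥ 0`, the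
quotient `ΔP^{≤k+1} / ΔP^{≤k}` is the wedge `⋁_{h ∈ P^{k+1}} Σ ΔP_{<h}`. -/
theorem quotient_orderComplex_homeo_bigWedge_susp
    (P : Type) [PartialOrder P] [Finite P] (k : ℕ) :
    ∃ pt : ∀ h : level P (k + 1), Susp (ΔSp (Set.Iio (h : P))),
      Nonempty
        (QuotBy (ΔSp (levelLE P (k + 1)))
            {f : ΔSp (levelLE P (k + 1)) | (f : P → ℝ) ∈ ocSet P (levelLE P k)} ≃ₜ
          BigWedge (fun h : level P (k + 1) => Susp (ΔSp (Set.Iio (h : P)))) pt) := by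
  classical
  have := Fintype.ofFinite P
  exact ⟨fun _ => Susp.pole false,
    ⟨(continuous_wedgeToQuot.homeoOfEquivCompactToT2 (f := wedgeEquivQuot P k)).symm⟩⟩
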